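/- arXiv:2103.03721 — 2 statements merged into one kernel-verified Lean document; each statement's English description precedes it below -/
import Mathlib

section
/- In the Setting, for every integer n ≥ 0 one has the equality of ideals of B_{n+1}: φ̃_{n+1}((L ⊗_R τ_n(X/V, φ I, 𝔞^λ))^{1/q}) + (𝔞^{⌈λ/q⌉} I) B_{n+1} = τ_{n+1}(X/V, φ I, 𝔞^{λ/q}). -/
/-!
This file formalizes a statement about the limiting relative test ideals of
Sato–Takagi, "General hyperplane sections of log canonical threefolds /
Deformations of F-pure and F-regular singularities" (Appendix A).

Throughout, for a (commutative) ring `C` of characteristic `p > 0` and `q = p^e`,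
the ring `C^{1/q^n}` of `q^n`-th roots is *modelled* by a copy of `C`, the
identification being the isomorphism `ψ_n : C^{1/q^n} ≃ C`, `x ↦ x^{q^n}`.
Under this identification:
* the inclusion `C ⊆ C^{1/q^n}` becomes `x ↦ x^{q^n}`,
* the inclusion `C^{1/q^i} ⊆ C^{1/q^n}` (`i ≤ n`) becomes `x ↦ x^{q^{n-i}}`,
* for a `C`-module `M`, the `C^{1/q^n}`-module `M^{1/q^n}` becomes the
  abelian group `M` with appropriately twisted scalar multiplications.
All objects of the Setting (`B_n = R ⊗_A A^{1/q^n}`, `L^{(n)}`, the maps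
`φ̃_n`, `φ^n`, the ideals `τ_n(X/V, φ I, 𝔞^λ)`) are realized accordingly below.
-/

open scoped TensorProduct

noncomputable section

universe u

/-- `A^{1/q^n}`, realized as a copy of `A`; the identification sends `x ∈ A^{1/q^n}`
to its coordinate `x^{q^n} ∈ A`. -/
def ARoot (A : Type u) (p e n : ℕ) : Type u := A

namespace ARoot

variable (A : Type u) [CommRing A] (p e : ℕ) [ExpChar A p]

instance (n : ℕ) : CommRing (ARoot A p e n) := inferInstanceAs (CommRing A)

/-- the inclusion `A ⊆ A^{1/q^n}` (in coordinates, `a ↦ a^{q^n}`). -/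
instance (n : ℕ) : Algebra A (ARoot A p e n) :=
  (show A →+* ARoot A p e n from iterateFrobenius A p (e * n)).toAlgebra

/-- coordinate-wise identity map `A^{1/q^m} → A^{1/q^n}`; for `m ≤ n` this is the
`q^{n-m}`-th root isomorphism `x ↦ x^{1/q^{n-m}}`. -/
def cast {A : Type u} {p e : ℕ} (m n : ℕ) (a : ARoot A p e m) : ARoot A p e n := a

/-- the inclusion `A^{1/q^i} ⊆ A^{1/q^n}` for `i ≤ n` (in coordinates,
`x ↦ x^{q^{n-i}}`). -/
def incl (i n : ℕ) (h : i ≤ n) : ARoot A p e i →ₐ[A] ARoot A p e n :=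
  AlgHom.mk (show ARoot A p e i →+* ARoot A p e n from iterateFrobenius A p (e * (n - i)))
    (fun a => by
      show iterateFrobenius A p (e * (n - i)) (iterateFrobenius A p (e * i) a)
        = iterateFrobenius A p (e * n) a
      rw [iterateFrobenius_def, iterateFrobenius_def, iterateFrobenius_def,
        ← pow_mul, ← pow_add, ← Nat.mul_add, Nat.add_sub_cancel' h])

end ARoot

section B

variable (A : Type u) [CommRing A] (p e : ℕ) [ExpChar A p]
variable (R : Type u) [CommRing R] [Algebra A R] [ExpChar R p]

/-- `B_n := R ⊗_A A^{1/q^n}`. -/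
def BRing (n : ℕ) : Type u := R ⊗[A] (ARoot A p e n)

instance (n : ℕ) : CommRing (BRing A p e R n) :=
  inferInstanceAs (CommRing (R ⊗[A] ARoot A p e n))

instance (n : ℕ) : Algebra A (BRing A p e R n) :=
  inferInstanceAs (Algebra A (R ⊗[A] ARoot A p e n))

instance (n : ℕ) : Algebra R (BRing A p e R n) :=
  inferInstanceAs (Algebra R (R ⊗[A] ARoot A p e n))

/-- the natural map `a_{i,n} : B_i → B_n` (`i ≤ n`) induced by
`A^{1/q^i} ⊆ A^{1/q^n}`. -/
def aMap (i n : ℕ) (h : i ≤ n) : BRing A p e R i →ₐ[A] BRing A p e R n :=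
  Algebra.TensorProduct.map (AlgHom.id A R) (ARoot.incl A p e i n h)

/-- A copy of `R` with the `A`-algebra structure `a ↦ (algebraMap A R a)^{q^n}`;
an auxiliary device used to define `Θ_n : B_n → R` below. -/
def Rtw (A : Type u) (p e : ℕ) (R : Type u) (n : ℕ) : Type u := R

instance (n : ℕ) : CommRing (Rtw A p e R n) := inferInstanceAs (CommRing R)

instance (n : ℕ) : Algebra A (Rtw A p e R n) :=
  ((show R →+* Rtw A p e R n from iterateFrobenius R p (e * n)).comp (algebraMap A R)).toAlgebra

/-- `Θ_n : B_n = R ⊗_A A^{1/q^n} →+* R` is the ring homomorphism corresponding, under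
the identifications above, to the inclusion `B_n ⊆ R^{1/q^n}` followed by the
isomorphism `R^{1/q^n} ≅ R`, `x ↦ x^{q^n}`; concretely, on coordinates,
`Θ_n (r ⊗ a) = r^{q^n} · g(a)` where `g : A → R` is the structure map.
Restriction of scalars along `Θ_n` equips the underlying group `M` of an
`R`-module with its `B_n`-module structure of `M^{1/q^n}`. -/
def theta (n : ℕ) : BRing A p e R n →+* R :=
  show BRing A p e R n →+* Rtw A p e R n from
  (Algebra.TensorProduct.productMap
    (AlgHom.mk (show R →+* Rtw A p e R n from iterateFrobenius R p (e * n)) (fun a => by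
      show iterateFrobenius R p (e * n) (algebraMap A R a) = algebraMap A (Rtw A p e R n) a
      rw [RingHom.algebraMap_toAlgebra]; rfl))
    (AlgHom.mk (show ARoot A p e n →+* Rtw A p e R n from algebraMap A R) (fun a => by
      show algebraMap A R (iterateFrobenius A p (e * n) a)
          = iterateFrobenius R p (e * n) (algebraMap A R a)
      rw [iterateFrobenius_def, iterateFrobenius_def, map_pow]))).toRingHom

/-- `M^{1/q^n}` for an `R`-module `M`: the abelian group `M` viewed as a module
over `B_n` via `Θ_n`. -/
def RootMod (A : Type u) (p e : ℕ) (R : Type u) (n : ℕ) (M : Type u) : Type u := M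

instance (n : ℕ) (M : Type u) [AddCommGroup M] : AddCommGroup (RootMod A p e R n M) :=
  inferInstanceAs (AddCommGroup M)

instance (n : ℕ) (M : Type u) [AddCommGroup M] [Module R M] :
    Module (BRing A p e R n) (RootMod A p e R n M) :=
  Module.compHom M (theta A p e R n)

/-- the tautological map `M → M^{1/q^n}`, `x ↦ x^{1/q^n}`. -/
def RootMod.of (n : ℕ) {M : Type u} (x : M) : RootMod A p e R n M := x

variable (L : Type u) [AddCommGroup L] [Module R L]

/-- `L^{(n)} := L^{⊗ (q^n - 1)/(q - 1)}`, realized recursively via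
`L^{(0)} = R` and `L^{(n+1)} = L^{⊗ q^n} ⊗_R L^{(n)}`. -/
def LObj (q : ℕ) : ℕ → ModuleCat.{u} R
  | 0 => ModuleCat.of R R
  | (n+1) => ModuleCat.of R (TensorPower R (q ^ n) L ⊗[R] (LObj q n))

/-- The `n`-th limiting relative test ideal
`τ_n(X/V, φ I, 𝔞^λ) := Σ_{i=0}^n φ^i((𝔞^{⌈q^i λ⌉} I L^{(i)})^{1/q^i}) B_n ⊆ B_n`,
expressed in terms of the family `Φ = (φ^i)_i` of the maps
`φ^i : (L^{(i)})^{1/q^i} → B_i`. -/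
def tauRel
    (Φ : (n : ℕ) → (RootMod A p e R n (LObj R L (p ^ e) n)
      →ₗ[BRing A p e R n] BRing A p e R n))
    (I 𝔞 : Ideal R) (lam : ℝ) (n : ℕ) : Ideal (BRing A p e R n) :=
  ⨆ i : Fin (n + 1),
    Ideal.span ((aMap A p e R i n (Nat.lt_succ_iff.mp i.isLt)) ''
      ((fun x : LObj R L (p ^ e) i => Φ i (RootMod.of A p e R i x)) ''
        (((𝔞 ^ ⌈((p : ℝ) ^ e) ^ (i : ℕ) * lam⌉₊ * I) •
            (⊤ : Submodule R (LObj R L (p ^ e) i)) :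
              Submodule R (LObj R L (p ^ e) i)) :
          Set (LObj R L (p ^ e) i))))

end B

/-! Both sides are sums indexed by `i`. The summand `i = 0` of `τ_{n+1}(𝔞^{λ/q})` is
`(𝔞^{⌈λ/q⌉} I) B_{n+1}` since `φ^0 = id`, and `⌈q^{i+1} λ/q⌉ = ⌈q^i λ⌉`, so it suffices that
`φ̃_{n+1}` carries the `i`-th summand of `τ_n(𝔞^λ)` onto the `(i+1)`-st summand of
`τ_{n+1}(𝔞^{λ/q})`. The recursion `φ^{i+1}(l^{⊗ q^i} ⊗ w) = φ̃_{i+1}(l ⊗ φ^i(w))` gives this on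
the diagonal generators `l^{⊗ q^i} ⊗ w` of `L^{(i+1)}`, and these generate because `L` is
invertible and we are in characteristic `p`: the diagonal tensors span `L^{⊗ p^s}`. -/

theorem iSup_fin_succ {α : Type*} [CompleteLattice α] {n : ℕ} (f : Fin (n + 1) → α) :
    ⨆ i, f i = f 0 ⊔ ⨆ i : Fin n, f i.succ := by
  rw [← (finSuccEquiv n).symm.iSup_comp, iSup_option]
  simp

theorem TensorProduct.mem_closure_tmul_of_mem_smul_top {R M N : Type*} [CommRing R]
    [AddCommGroup M] [Module R M] [AddCommGroup N] [Module R N]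
    {D : Set M} (hD : Submodule.span R D = ⊤) (J : Ideal R) {x : M ⊗[R] N}
    (hx : x ∈ J • (⊤ : Submodule R (M ⊗[R] N))) :
    x ∈ AddSubmonoid.closure
      (Set.image2 (· ⊗ₜ[R] ·) D ((J • ⊤ : Submodule R N) : Set N)) := by
  set C := AddSubmonoid.closure
    (Set.image2 (· ⊗ₜ[R] ·) D ((J • ⊤ : Submodule R N) : Set N))
  have tmul_mem (m : M) : ∀ y ∈ J • (⊤ : Submodule R N), m ⊗ₜ[R] y ∈ C := by
    induction (hD ▸ Submodule.mem_top : m ∈ Submodule.span R D) using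
      Submodule.span_induction with
    | mem d hd => exact fun y hy => AddSubmonoid.subset_closure ⟨d, hd, y, hy, rfl⟩
    | zero => exact fun y _ => by rw [TensorProduct.zero_tmul]; exact zero_mem C
    | add a b _ _ ha hb =>
      exact fun y hy => by rw [TensorProduct.add_tmul]; exact add_mem (ha y hy) (hb y hy)
    | smul r a _ ha =>
      exact fun y hy => by rw [TensorProduct.smul_tmul]; exact ha _ (Submodule.smul_mem _ r hy)
  refine Submodule.smul_induction_on hx (fun r hr u _ => ?_) fun _ _ => add_mem
  induction u using TensorProduct.induction_on with
  | zero => rw [smul_zero]; exact zero_mem C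
  | tmul m y =>
    rw [← TensorProduct.tmul_smul]
    exact tmul_mem m _ (Submodule.smul_mem_smul hr Submodule.mem_top)
  | add u v hu hv =>
    rw [smul_add]
    exact add_mem (hu Submodule.mem_top) (hv Submodule.mem_top)

theorem TensorProduct.tmul_mem_smul_top {R M N : Type*} [CommRing R]
    [AddCommGroup M] [Module R M] [AddCommGroup N] [Module R N]
    {J : Ideal R} (m : M) {y : N} (hy : y ∈ J • (⊤ : Submodule R N)) :
    m ⊗ₜ[R] y ∈ J • (⊤ : Submodule R (M ⊗[R] N)) := by
  have := Submodule.mem_map_of_mem (f := TensorProduct.mk R M N m) hy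
  rw [Submodule.map_smul''] at this
  exact (smul_mono_right J le_top : J • _ ≤ J • (⊤ : Submodule R (M ⊗[R] N))) this

namespace Module.Invertible

variable {R L : Type*} [CommRing R] [AddCommGroup L] [Module R L] [Module.Invertible R L]

theorem apply_smul_comm (f : Module.Dual R L) (a b : L) : f a • b = f b • a := by
  simpa using congr_arg (TensorProduct.lift ((LinearMap.lsmul R L).comp f))
    (tmul_comm (m₁ := a) (m₂ := b))

/-- Writing `1 = ∑ fₖ(lₖ)` and raising it to the `p ^ s`-th power, every pure tensor of
`L^{⊗ p^s}` becomes a combination of the `lₖ ⊗ ⋯ ⊗ lₖ`. -/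
theorem span_tprod_const_eq_top (p s : ℕ) [ExpChar R p] :
    Submodule.span R (Set.range fun l : L => PiTensorProduct.tprod R fun _ : Fin (p ^ s) => l)
      = ⊤ := by
  obtain ⟨t, ht⟩ := (Module.Invertible.bijective (R := R) (M := L)).2 1
  obtain ⟨S, rfl⟩ := TensorProduct.exists_finset t
  have hS : ∑ k ∈ S, k.1 k.2 ^ p ^ s = 1 := by
    rw [← sum_pow_char_pow, ← one_pow (p ^ s), ← ht, map_sum]
    rfl
  rw [eq_top_iff, ← PiTensorProduct.span_tprod_eq_top, Submodule.span_le]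
  rintro _ ⟨x, rfl⟩
  rw [SetLike.mem_coe, ← one_smul R (PiTensorProduct.tprod R x), ← hS, Finset.sum_smul]
  refine Submodule.sum_mem _ fun k _ => ?_
  have hk : k.1 k.2 ^ p ^ s • PiTensorProduct.tprod R x
      = (∏ j, k.1 (x j)) • PiTensorProduct.tprod R fun _ => k.2 := by
    have hpow : k.1 k.2 ^ p ^ s = ∏ _ : Fin (p ^ s), k.1 k.2 := by simp
    rw [hpow, ← MultilinearMap.map_smul_univ, ← MultilinearMap.map_smul_univ]
    simp_rw [apply_smul_comm k.1 k.2]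
  rw [hk]
  exact Submodule.smul_mem _ _ (Submodule.subset_span ⟨k.2, rfl⟩)

end Module.Invertible

section BRing

variable {A : Type u} [CommRing A] {p e : ℕ} [ExpChar A p]
variable {R : Type u} [CommRing R] [Algebra A R]

theorem ARoot.incl_comp_incl {i j n : ℕ} (hij : i ≤ j) (hjn : j ≤ n) :
    (ARoot.incl A p e j n hjn).comp (ARoot.incl A p e i j hij)
      = ARoot.incl A p e i n (hij.trans hjn) := by
  ext a
  show (a ^ p ^ (e * (j - i))) ^ p ^ (e * (n - j)) = a ^ p ^ (e * (n - i))
  rw [← pow_mul, ← pow_add, ← Nat.mul_add, show j - i + (n - j) = n - i by omega]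

variable (A p e) in
/-- `r ⊗ₜ a` typed as an element of `B_n`, so that the ring structure of `B_n` applies to it. -/
abbrev BRing.tmul {n : ℕ} (r : R) (a : ARoot A p e n) : BRing A p e R n := r ⊗ₜ[A] a

theorem BRing.tmul_mul_tmul {n : ℕ} (r s : R) (a b : ARoot A p e n) :
    BRing.tmul A p e r a * BRing.tmul A p e s b = BRing.tmul A p e (r * s) (a * b) :=
  Algebra.TensorProduct.tmul_mul_tmul r s a b

@[elab_as_elim]
theorem BRing.induction_on {n : ℕ} {motive : BRing A p e R n → Prop} (x : BRing A p e R n)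
    (zero : motive 0) (tmul : ∀ (r : R) (a : ARoot A p e n), motive (BRing.tmul A p e r a))
    (add : ∀ x y, motive x → motive y → motive (x + y)) : motive x :=
  TensorProduct.induction_on x zero tmul add

theorem aMap_aMap {i j n : ℕ} (hij : i ≤ j) (hjn : j ≤ n) (x : BRing A p e R i) :
    aMap A p e R j n hjn (aMap A p e R i j hij x) = aMap A p e R i n (hij.trans hjn) x := by
  induction x using BRing.induction_on with
  | zero => simp only [map_zero]
  | tmul r a => exact congrArg (r ⊗ₜ[A] ·) (DFunLike.congr_fun (ARoot.incl_comp_incl hij hjn) a)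
  | add x y hx hy => rw [map_add, map_add, hx, hy, map_add]

theorem ARoot.incl_cast {j n : ℕ} (h : j ≤ n) (a : ARoot A p e j) :
    ARoot.incl A p e (j + 1) (n + 1) (Nat.succ_le_succ h) (ARoot.cast j (j + 1) a)
      = ARoot.cast n (n + 1) (ARoot.incl A p e j n h a) := by
  show a ^ p ^ (e * (n + 1 - (j + 1))) = a ^ p ^ (e * (n - j))
  rw [Nat.add_sub_add_right]

end BRing

section PhiTilde

variable {A : Type u} [CommRing A] {p e : ℕ} [ExpChar A p]
variable {R : Type u} [CommRing R] [Algebra A R]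
variable {L : Type u} [AddCommGroup L] [Module R L]
variable {Φt : (n : ℕ) → (L ⊗[R] BRing A p e R n) →+ BRing A p e R (n + 1)}

variable (Φt) in
/-- The ideal of `B_{n+1}` generated by `φ̃_{n+1}((L ⊗_R s)^{1/q})`. -/
def phiTildeSpan (n : ℕ) (s : Set (BRing A p e R n)) : Ideal (BRing A p e R (n + 1)) :=
  Ideal.span (Φt n '' {x | ∃ (l : L) (c : BRing A p e R n), c ∈ s ∧ x = l ⊗ₜ[R] c})

theorem phiTildeSpan_iUnion {n : ℕ} {ι : Sort*} (s : ι → Set (BRing A p e R n)) :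
    phiTildeSpan Φt n (⋃ i, s i) = ⨆ i, phiTildeSpan Φt n (s i) := by
  simp only [phiTildeSpan, ← Ideal.span_iUnion, ← Set.image_iUnion, Set.mem_iUnion]
  congr 2
  ext x
  simp only [Set.mem_ofPred_eq, Set.mem_iUnion]
  grind

variable [ExpChar R p]

variable (A p e R L) in
/-- `Φt` realizes the maps `φ̃_{n+1} : (L ⊗_R B_n)^{1/q} → B_{n+1}` attached to `φ`. -/
def IsPhiTilde (φ : RootMod A p e R 1 L →ₗ[BRing A p e R 1] BRing A p e R 1)
    (Φt : (n : ℕ) → (L ⊗[R] BRing A p e R n) →+ BRing A p e R (n + 1)) : Prop :=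
  ∀ (n : ℕ) (l : L) (r : R) (a : ARoot A p e n),
    Φt n (l ⊗ₜ[R] BRing.tmul A p e r a)
      = aMap A p e R 1 (n + 1) (Nat.le_add_left 1 n) (φ (RootMod.of A p e R 1 (r • l)))
          * BRing.tmul A p e (1 : R) (ARoot.cast n (n + 1) a)

variable {φ : RootMod A p e R 1 L →ₗ[BRing A p e R 1] BRing A p e R 1}

theorem IsPhiTilde.map_tmul_tmul_mul (hΦt : IsPhiTilde A p e R L φ Φt) {n : ℕ} (l : L) (r : R)
    (a : ARoot A p e n) (c : BRing A p e R n) :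
    Φt n (l ⊗ₜ[R] (BRing.tmul A p e r a * c))
      = BRing.tmul A p e (1 : R) (ARoot.cast n (n + 1) a) * Φt n ((r • l) ⊗ₜ[R] c) := by
  induction c using BRing.induction_on with
  | zero => rw [mul_zero, TensorProduct.tmul_zero, map_zero, TensorProduct.tmul_zero, map_zero,
      mul_zero]
  | add x y hx hy => rw [mul_add, TensorProduct.tmul_add, map_add, hx, hy,
      TensorProduct.tmul_add, map_add, mul_add]
  | tmul s b =>
    rw [BRing.tmul_mul_tmul, hΦt, hΦt, mul_left_comm, smul_smul, mul_comm s r,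
      BRing.tmul_mul_tmul, one_mul]
    rfl

theorem IsPhiTilde.map_tmul_aMap (hΦt : IsPhiTilde A p e R L φ Φt) {j n : ℕ} (h : j ≤ n) (l : L)
    (x : BRing A p e R j) :
    Φt n (l ⊗ₜ[R] aMap A p e R j n h x)
      = aMap A p e R (j + 1) (n + 1) (Nat.succ_le_succ h) (Φt j (l ⊗ₜ[R] x)) := by
  induction x using BRing.induction_on with
  | zero => simp only [map_zero, TensorProduct.tmul_zero]
  | add x y hx hy => rw [map_add, TensorProduct.tmul_add, map_add, hx, hy, TensorProduct.tmul_add,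
      map_add, map_add]
  | tmul r a =>
    erw [hΦt, hΦt, map_mul, aMap_aMap]
    congr 1
    exact congrArg ((1 : R) ⊗ₜ[A] ·) (ARoot.incl_cast h a).symm

/-- `c ↦ φ̃_{n+1}(l ⊗ c)` is only additive, but `φ̃_{n+1}(l ⊗ (r ⊗ a) c)` is a multiple of
`φ̃_{n+1}(r l ⊗ c)`, which is enough to pass from generators to the ideal they span. -/
theorem IsPhiTilde.phiTildeSpan_span (hΦt : IsPhiTilde A p e R L φ Φt) (n : ℕ)
    (s : Set (BRing A p e R n)) : phiTildeSpan Φt n (Ideal.span s) = phiTildeSpan Φt n s := by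
  refine le_antisymm (Ideal.span_le.2 ?_)
    (Ideal.span_mono (Set.image_mono fun _ ⟨l, c, hc, hx⟩ => ⟨l, c, Ideal.subset_span hc, hx⟩))
  rintro _ ⟨_, ⟨l, c, hc, rfl⟩, rfl⟩
  induction hc using Submodule.span_induction generalizing l with
  | mem c hc => exact Ideal.subset_span ⟨_, ⟨l, c, hc, rfl⟩, rfl⟩
  | zero => simp only [TensorProduct.tmul_zero, map_zero, SetLike.mem_coe, zero_mem]
  | add x y _ _ hx hy => rw [TensorProduct.tmul_add, map_add]; exact add_mem (hx l) (hy l)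
  | smul b c _ hc =>
    induction b using BRing.induction_on generalizing l with
    | zero => simp only [zero_smul, TensorProduct.tmul_zero, map_zero, SetLike.mem_coe, zero_mem]
    | add x y hx hy => rw [add_smul, TensorProduct.tmul_add, map_add]; exact add_mem (hx l) (hy l)
    | tmul r a =>
      rw [smul_eq_mul, hΦt.map_tmul_tmul_mul]
      exact Ideal.mul_mem_left _ _ (hc (r • l))

end PhiTilde

section TestIdeal

variable {A : Type u} [CommRing A] {p e : ℕ} [ExpChar A p]
variable {R : Type u} [CommRing R] [Algebra A R] [ExpChar R p]
variable {L : Type u} [AddCommGroup L] [Module R L]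
variable {φ : RootMod A p e R 1 L →ₗ[BRing A p e R 1] BRing A p e R 1}
variable {Φt : (n : ℕ) → (L ⊗[R] BRing A p e R n) →+ BRing A p e R (n + 1)}
variable {Φ : (n : ℕ) → (RootMod A p e R n (LObj R L (p ^ e) n)
  →ₗ[BRing A p e R n] BRing A p e R n)}

theorem phi_zero_apply (hΦzero : Φ 0 (RootMod.of A p e R 0 (1 : R)) = 1)
    (x : R) : Φ 0 (RootMod.of A p e R 0 x) = algebraMap R (BRing A p e R 0) x := by
  have hx : RootMod.of A p e R 0 (M := LObj R L (p ^ e) 0) x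
      = algebraMap R (BRing A p e R 0) x
          • RootMod.of A p e R 0 (M := LObj R L (p ^ e) 0) (1 : R) := by
    show x = x ^ p ^ (e * 0) * algebraMap A R 1 * 1
    simp
  rw [hx, map_smul, hΦzero, smul_eq_mul, mul_one]

variable (Φt Φ) in
/-- `Φ` satisfies the recursion `φ^{n+1} = φ̃_{n+1} ∘ (id_L ⊗ φ^n)`, read on the diagonal tensors
`l^{⊗ q^n} ⊗ w` of `L^{(n+1)} = L^{⊗ q^n} ⊗ L^{(n)}`. -/
def IsPhiIterate : Prop :=
  ∀ (n : ℕ) (l : L) (w : LObj R L (p ^ e) n),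
    Φ (n + 1) (RootMod.of A p e R (n + 1)
        ((PiTensorProduct.tprod R fun _ : Fin ((p ^ e) ^ n) => l) ⊗ₜ[R] w))
      = Φt n (l ⊗ₜ[R] (Φ n (RootMod.of A p e R n w)))

theorem IsPhiIterate.map_tmul_aMap_phi (hΦsucc : IsPhiIterate Φt Φ)
    (hΦt : IsPhiTilde A p e R L φ Φt) {j n : ℕ} (h : j ≤ n) (l : L) (w : LObj R L (p ^ e) j) :
    Φt n (l ⊗ₜ[R] aMap A p e R j n h (Φ j (RootMod.of A p e R j w)))
      = aMap A p e R (j + 1) (n + 1) (Nat.succ_le_succ h)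
          (Φ (j + 1) (RootMod.of A p e R (j + 1)
            ((PiTensorProduct.tprod R fun _ : Fin ((p ^ e) ^ j) => l) ⊗ₜ[R] w))) := by
  rw [hΦt.map_tmul_aMap, hΦsucc]

variable (Φ) in
/-- The generators `φ^i((J L^{(i)})^{1/q^i})` of the `i`-th summand of `τ_n`, pushed to `B_n`. -/
def tauGenerators (J : Ideal R) (i n : ℕ) (h : i ≤ n) : Set (BRing A p e R n) :=
  aMap A p e R i n h '' ((fun x : LObj R L (p ^ e) i => Φ i (RootMod.of A p e R i x)) ''
    ((J • ⊤ : Submodule R (LObj R L (p ^ e) i)) : Set (LObj R L (p ^ e) i)))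

theorem tauRel_eq_iSup (I 𝔞 : Ideal R) (lam : ℝ) (n : ℕ) :
    tauRel A p e R L Φ I 𝔞 lam n = ⨆ i : Fin (n + 1),
      Ideal.span (tauGenerators Φ (𝔞 ^ ⌈((p : ℝ) ^ e) ^ (i : ℕ) * lam⌉₊ * I) i n
        (Nat.lt_succ_iff.mp i.isLt)) :=
  rfl

theorem span_tauGenerators_zero (hΦzero : Φ 0 (RootMod.of A p e R 0 (1 : R)) = 1)
    (J : Ideal R) (n : ℕ) :
    Ideal.span (tauGenerators Φ J 0 n n.zero_le) = J.map (algebraMap R (BRing A p e R n)) := by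
  have hJ : ((J • ⊤ : Submodule R (LObj R L (p ^ e) 0)) : Set (LObj R L (p ^ e) 0))
      = (J : Set R) := by
    change ((J • ⊤ : Submodule R R) : Set R) = J
    rw [Ideal.smul_eq_mul, Ideal.mul_top]
  rw [tauGenerators, Set.image_image, hJ, Ideal.map]
  congr 1
  refine Set.image_congr fun x _ => (congrArg _ (phi_zero_apply hΦzero x)).trans ?_
  exact congrArg ((show R from x) ⊗ₜ[A] ·) (map_one (ARoot.incl A p e 0 n n.zero_le))

/-- Since `L` is invertible, `L^{⊗ q^j}` is spanned by the diagonal tensors `l^{⊗ q^j}`, so the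
generators of `J L^{(j+1)}` may be taken of the form `l^{⊗ q^j} ⊗ w` with `w ∈ J L^{(j)}`. -/
theorem phiTildeSpan_tauGenerators [Module.Invertible R L] (hΦt : IsPhiTilde A p e R L φ Φt)
    (hΦsucc : IsPhiIterate Φt Φ) (J : Ideal R) {j n : ℕ} (h : j ≤ n) :
    phiTildeSpan Φt n (tauGenerators Φ J j n h)
      = Ideal.span (tauGenerators Φ J (j + 1) (n + 1) (Nat.succ_le_succ h)) := by
  apply le_antisymm <;> refine Ideal.span_le.2 ?_
  · rintro _ ⟨_, ⟨l, _, ⟨_, ⟨w, hw, rfl⟩, rfl⟩, rfl⟩, rfl⟩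
    rw [hΦsucc.map_tmul_aMap_phi hΦt]
    exact Ideal.subset_span ⟨_, ⟨_, TensorProduct.tmul_mem_smul_top _ hw, rfl⟩, rfl⟩
  · rintro _ ⟨_, ⟨w, hw, rfl⟩, rfl⟩
    have hD := Module.Invertible.span_tprod_const_eq_top (R := R) (L := L) p (e * j)
    rw [pow_mul] at hD
    have hw' := TensorProduct.mem_closure_tmul_of_mem_smul_top
      (M := TensorPower R ((p ^ e) ^ j) L) (N := LObj R L (p ^ e) j) hD J hw
    clear hw
    induction hw' using AddSubmonoid.closure_induction with
    | mem _ hx =>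
      obtain ⟨_, ⟨l, rfl⟩, v, hv, rfl⟩ := hx
      rw [← hΦsucc.map_tmul_aMap_phi hΦt h]
      exact Ideal.subset_span ⟨_, ⟨l, _, ⟨_, ⟨v, hv, rfl⟩, rfl⟩, rfl⟩, rfl⟩
    | zero =>
      show aMap A p e R (j + 1) (n + 1) _ (Φ (j + 1) 0) ∈ _
      rw [map_zero, map_zero]
      exact zero_mem _
    | add x y _ _ hx hy =>
      show aMap A p e R (j + 1) (n + 1) _
        (Φ (j + 1) (RootMod.of A p e R (j + 1) x + RootMod.of A p e R (j + 1) y)) ∈ _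
      rw [map_add, map_add]
      exact add_mem hx hy

end TestIdeal

section Setting

/-! ### The Setting

`A` is a Noetherian integral domain of characteristic `p > 0`, `R` is an integral
domain which is flat and essentially of finite type over `A`, `q = p^e`,
`L` is an invertible `R`-module, `φ : L^{1/q} → B_1 = R ⊗_A A^{1/q}` is a
`B_1`-module homomorphism, `I` and `𝔞` are nonzero ideals of `R` and `lam > 0` is
a real number.

The map `φ̃_{n+1} : (L ⊗_R B_n)^{1/q} → B_{n+1}` is the additive map `Φt n`
(uniquely) characterized by the hypothesis `hΦt`, and the `B_n`-linear map
`φ^n : (L^{(n)})^{1/q^n} → B_n` is the map `Φ n`, (uniquely) characterized by the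
recursion hypotheses `hΦzero`, `hΦsucc`. -/

variable (A : Type u) [CommRing A] [IsDomain A] [IsNoetherianRing A]
variable (p : ℕ) [Fact p.Prime] [CharP A p] (e : ℕ)
variable (R : Type u) [CommRing R] [IsDomain R] [Algebra A R] [CharP R p]
variable [Module.Flat A R] [Algebra.EssFiniteType A R]
variable (L : Type u) [AddCommGroup L] [Module R L]
variable [Module.Finite R L] [Module.Projective R L]
variable (I 𝔞 : Ideal R) (lam : ℝ)
variable (φ : RootMod A p e R 1 L →ₗ[BRing A p e R 1] BRing A p e R 1)
variable (Φt : (n : ℕ) → (L ⊗[R] BRing A p e R n) →+ BRing A p e R (n + 1))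
variable (Φ : (n : ℕ) → (RootMod A p e R n (LObj R L (p ^ e) n)
  →ₗ[BRing A p e R n] BRing A p e R n))

/-- In the Setting, for every `n ≥ 0` one has the equality of
ideals of `B_{n+1}`:
`φ̃_{n+1}((L ⊗_R τ_n(X/V, φ I, 𝔞^lam))^{1/q}) + (𝔞^{⌈lam/q⌉} I) B_{n+1}
  = τ_{n+1}(X/V, φ I, 𝔞^{lam/q})`.
(The first summand is the ideal of `B_{n+1}` generated by the image under
`φ̃_{n+1}` of the `q`-th root of `L ⊗_R τ_n`, i.e. by the images of the elements
`l ⊗ c` with `c ∈ τ_n(X/V, φ I, 𝔞^lam)`.) -/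
theorem statement3
    (hL : ∃ L' : ModuleCat.{u} R, Nonempty ((L ⊗[R] L') ≃ₗ[R] R))
    (hΦt : ∀ (n : ℕ) (l : L) (r : R) (a : ARoot A p e n),
      Φt n (l ⊗ₜ[R] (r ⊗ₜ[A] a))
        = aMap A p e R 1 (n+1) (by omega) (φ (RootMod.of A p e R 1 (r • l)))
            * (show BRing A p e R (n+1) from (1 : R) ⊗ₜ[A] (ARoot.cast n (n+1) a)))
    (hΦzero : Φ 0 (RootMod.of A p e R 0 (1 : R)) = 1)
    (hΦsucc : ∀ (n : ℕ) (l : L) (w : LObj R L (p ^ e) n),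
      Φ (n+1) (RootMod.of A p e R (n+1)
          ((PiTensorProduct.tprod R fun _ : Fin ((p ^ e) ^ n) => l) ⊗ₜ[R] w))
        = Φt n (l ⊗ₜ[R] (Φ n (RootMod.of A p e R n w))))
    (n : ℕ) :
    Ideal.span ((Φt n) '' {x : L ⊗[R] BRing A p e R n |
        ∃ (l : L) (c : BRing A p e R n),
          c ∈ tauRel A p e R L Φ I 𝔞 lam n ∧ x = l ⊗ₜ[R] c})
      + Ideal.map (algebraMap R (BRing A p e R (n+1)))
          (𝔞 ^ ⌈lam / (p : ℝ) ^ e⌉₊ * I)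
      = tauRel A p e R L Φ I 𝔞 (lam / (p : ℝ) ^ e) (n+1) := by
  replace hΦt : IsPhiTilde A p e R L φ Φt := hΦt
  obtain ⟨L', ⟨ε⟩⟩ := hL
  have : Module.Invertible R L := .left ε
  have hq : ((p : ℝ) ^ e) ≠ 0 := pow_ne_zero _ (Nat.cast_ne_zero.2 (Fact.out : p.Prime).ne_zero)
  have hceil (k : ℕ) :
      ⌈((p : ℝ) ^ e) ^ (k + 1) * (lam / (p : ℝ) ^ e)⌉₊ = ⌈((p : ℝ) ^ e) ^ k * lam⌉₊ := by
    rw [pow_succ, mul_assoc, mul_div_cancel₀ _ hq]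
  change phiTildeSpan Φt n (tauRel A p e R L Φ I 𝔞 lam n : Set _) + _ = _
  rw [tauRel_eq_iSup, tauRel_eq_iSup, iSup_fin_succ (n := n + 1), ← Ideal.span_iUnion,
    hΦt.phiTildeSpan_span, phiTildeSpan_iUnion]
  simp_rw [phiTildeSpan_tauGenerators hΦt hΦsucc, Fin.val_succ, hceil, Fin.val_zero, pow_zero,
    one_mul]
  rw [span_tauGenerators_zero hΦzero, Submodule.add_eq_sup, sup_comm]
end Setting
end
end

section
/- In the Setting, assume that λ > μ(𝔞) − 1, where μ(𝔞) denotes the minimal number of generators of the ideal 𝔞. Then for every integer n ≥ 0 one has τ_n(X/V, φ I, 𝔞^λ) · 𝔞 = τ_n(X/V, φ I, 𝔞^{λ+1}) as ideals of B_n. -/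
/-!
This file formalizes a statement about the limiting relative test ideals of
Sato–Takagi, "General hyperplane sections of log canonical threefolds /
Deformations of F-pure and F-regular singularities" (Appendix A).

Throughout, for a (commutative) ring `C` of characteristic `p > 0` and `q = p^e`,
the ring `C^{1/q^n}` of `q^n`-th roots is *modelled* by a copy of `C`, the
identification being the isomorphism `ψ_n : C^{1/q^n} ≃ C`, `x ↦ x^{q^n}`.
Under this identification:
* the inclusion `C ⊆ C^{1/q^n}` becomes `x ↦ x^{q^n}`,
* the inclusion `C^{1/q^i} ⊆ C^{1/q^n}` (`i ≤ n`) becomes `x ↦ x^{q^{n-i}}`,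
* for a `C`-module `M`, the `C^{1/q^n}`-module `M^{1/q^n}` becomes the
  abelian group `M` with appropriately twisted scalar multiplications.
All objects of the Setting (`B_n = R ⊗_A A^{1/q^n}`, `L^{(n)}`, the maps
`φ̃_n`, `φ^n`, the ideals `τ_n(X/V, φ I, 𝔞^λ)`) are realized accordingly below.
-/

open scoped TensorProduct

noncomputable section

universe u

/-!
Write `𝔞 = (s)` and `Q = q^i`. The additive map `x ↦ φ^i(x^{1/q^i})` satisfies
`φ^i((r^Q x)^{1/q^i}) = r · φ^i(x^{1/q^i})`, so multiplying the `i`-th summand of `τ_n` by `𝔞`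
replaces `𝔞^m I` by `(a^Q : a ∈ s) 𝔞^m I`, where `m = ⌈Qλ⌉`. By pigeonhole, a monomial of degree
`m + Q` in the elements of `s` is divisible by some `a^Q` once `m + Q > |s| (Q - 1)`, which
`λ > |s| - 1` guarantees; hence `(a^Q : a ∈ s) 𝔞^m = 𝔞^{m+Q} = 𝔞^{⌈Q(λ+1)⌉}`.
-/

section Skoda

variable {R : Type*} [CommRing R]

theorem Ideal.span_pow_image_mul_pow_eq (s : Finset R) {Q m : ℕ} (h : s.card * (Q - 1) < m + Q) :
    Ideal.span ((· ^ Q) '' (s : Set R)) * Ideal.span (s : Set R) ^ m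
      = Ideal.span (s : Set R) ^ (m + Q) := by
  classical
  apply le_antisymm
  · rw [pow_add, mul_comm]
    refine Ideal.mul_mono_right (Ideal.span_le.2 ?_)
    rintro _ ⟨a, ha, rfl⟩
    exact Ideal.pow_mem_pow (Ideal.subset_span ha) Q
  rw [Ideal.span, Submodule.span_pow, ← Ideal.span, Ideal.span_le]
  intro x hx
  obtain ⟨f, rfl⟩ := Set.mem_pow.1 hx
  rw [List.prod_ofFn]
  obtain ⟨a, ha⟩ := Fintype.exists_lt_card_fiber_of_mul_lt_card f
    (by simpa only [Finset.coe_sort_coe, Fintype.card_coe, Fintype.card_fin] using h)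
  obtain ⟨T, hT, hTcard⟩ := Finset.exists_subset_card_eq
    (show Q ≤ ({i | f i = a} : Finset _).card by omega)
  rw [← Finset.prod_mul_prod_compl T]
  have hpow : ∏ i ∈ T, (f i : R) = a ^ Q := by
    rw [Finset.prod_eq_pow_card (b := (a : R)) fun i hi => by rw [(Finset.mem_filter.1 (hT hi)).2],
      hTcard]
  have hcompl : ∏ i ∈ Tᶜ, (f i : R) ∈ Ideal.span (s : Set R) ^ m := by
    have hcard : Tᶜ.card = m := by rw [Finset.card_compl, Fintype.card_fin, hTcard]; omega
    simpa only [Finset.prod_const, hcard] using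
      Ideal.prod_mem_prod (s := Tᶜ) (I := fun _ => Ideal.span (s : Set R))
        fun i _ => Ideal.subset_span (f i).2
  rw [hpow]
  exact Ideal.mul_mem_mul (Ideal.subset_span ⟨a, a.2, rfl⟩) hcompl

end Skoda

section SemilinearImage

variable {R B M : Type*} [CommRing R] [CommRing B] [AddCommGroup M] [Module R M]
  (G : M →+ B) (α : R →+* B) {Q : ℕ}

theorem span_image_span_pow_smul_eq (hG : ∀ (r : R) (x : M), G (r ^ Q • x) = α r * G x)
    (S : Set R) (N : Submodule R M) :
    Ideal.span (G '' (Ideal.span ((· ^ Q) '' S) • N : Submodule R M))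
      = Ideal.span (G '' N) * Ideal.map α (Ideal.span S) := by
  apply le_antisymm
  · rw [Ideal.span_le]
    rintro _ ⟨v, hv, rfl⟩
    refine Submodule.smul_induction_on hv (fun y hy v hv => ?_)
      fun x y hx hy => by rw [map_add]; exact add_mem hx hy
    induction hy using Submodule.span_induction generalizing v with
    | mem _ hy =>
      obtain ⟨a, ha, rfl⟩ := hy
      rw [hG, mul_comm (α a)]
      exact Ideal.mul_mem_mul (Ideal.subset_span ⟨v, hv, rfl⟩)
        (Ideal.mem_map_of_mem α (Ideal.subset_span ha))
    | zero => simp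
    | add x y _ _ hx hy => rw [add_smul, map_add]; exact add_mem (hx v hv) (hy v hv)
    | smul c y _ hy => rw [smul_eq_mul, mul_comm c, mul_smul]; exact hy _ (N.smul_mem c hv)
  · rw [Ideal.map_span, Ideal.span_mul_span', Ideal.span_le]
    rintro _ ⟨_, ⟨v, hv, rfl⟩, _, ⟨a, ha, rfl⟩, rfl⟩
    show G v * α a ∈ _
    rw [mul_comm, ← hG]
    exact Ideal.subset_span ⟨_, Submodule.smul_mem_smul (Ideal.subset_span ⟨a, ha, rfl⟩) hv, rfl⟩

theorem span_image_span_pow_mul_smul_top_mul_map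
    (hG : ∀ (r : R) (x : M), G (r ^ Q • x) = α r * G x) (s : Finset R) (I : Ideal R) {m : ℕ}
    (h : s.card * (Q - 1) < m + Q) :
    Ideal.span (G '' ((Ideal.span (s : Set R) ^ m * I) • ⊤ : Submodule R M))
        * Ideal.map α (Ideal.span s)
      = Ideal.span (G '' ((Ideal.span (s : Set R) ^ (m + Q) * I) • ⊤ : Submodule R M)) := by
  rw [← span_image_span_pow_smul_eq G α hG, ← Ideal.span_pow_image_mul_pow_eq s h, mul_assoc,
    ← Submodule.mul_smul]

end SemilinearImage

theorem Nat.ceil_natCast_mul_add_one (Q : ℕ) {x : ℝ} (hx : 0 ≤ x) :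
    ⌈(Q : ℝ) * (x + 1)⌉₊ = ⌈(Q : ℝ) * x⌉₊ + Q := by
  rw [_root_.mul_add_one, Nat.ceil_add_natCast (by positivity)]

theorem Nat.mul_pred_lt_ceil_mul_add {c Q : ℕ} (hQ : 0 < Q) {x : ℝ} (h : (c : ℝ) - 1 < x) :
    c * (Q - 1) < ⌈(Q : ℝ) * x⌉₊ + Q := by
  have hQ' : (0 : ℝ) < Q := by exact_mod_cast hQ
  have hreal : (c * Q : ℝ) < ⌈(Q : ℝ) * x⌉₊ + Q := by
    nlinarith [Nat.le_ceil ((Q : ℝ) * x)]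
  exact (Nat.mul_le_mul_left c (Nat.sub_le Q 1)).trans_lt (by exact_mod_cast hreal)

section RootAction

variable (A : Type u) [CommRing A] (p e : ℕ) [ExpChar A p]
variable (R : Type u) [CommRing R] [Algebra A R]

theorem aMap_algebraMap (i n : ℕ) (h : i ≤ n) (r : R) :
    aMap A p e R i n h (algebraMap R (BRing A p e R i) r) = algebraMap R (BRing A p e R n) r := by
  show Algebra.TensorProduct.map _ _ (r ⊗ₜ[A] 1) = r ⊗ₜ[A] 1
  rw [Algebra.TensorProduct.map_tmul, map_one]
  rfl

variable [ExpChar R p]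

theorem theta_algebraMap (i : ℕ) (r : R) :
    theta A p e R i (algebraMap R (BRing A p e R i) r) = r ^ (p ^ e) ^ i := by
  show iterateFrobenius R p (e * i) r * algebraMap A R 1 = _
  rw [map_one, mul_one, iterateFrobenius_def, pow_mul]

variable (L : Type u) [AddCommGroup L] [Module R L]
  (Φ : (n : ℕ) → (RootMod A p e R n (LObj R L (p ^ e) n) →ₗ[BRing A p e R n] BRing A p e R n))

/-- `x ↦ φ^i(x^{1/q^i})`, viewed in `B_n`. -/
def phiInB (i n : ℕ) (h : i ≤ n) : LObj R L (p ^ e) i →+ BRing A p e R n :=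
  AddMonoidHom.mk' (fun x => aMap A p e R i n h (Φ i (RootMod.of A p e R i x)))
    fun x y => by rw [← map_add, ← map_add]; rfl

theorem phiInB_pow_smul (i n : ℕ) (h : i ≤ n) (r : R) (x : LObj R L (p ^ e) i) :
    phiInB A p e R L Φ i n h (r ^ (p ^ e) ^ i • x)
      = algebraMap R (BRing A p e R n) r * phiInB A p e R L Φ i n h x := by
  have hsmul : RootMod.of A p e R i (r ^ (p ^ e) ^ i • x)
      = algebraMap R (BRing A p e R i) r • RootMod.of A p e R i x := by
    show r ^ (p ^ e) ^ i • x = theta A p e R i _ • x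
    rw [theta_algebraMap]
  show aMap A p e R i n h (Φ i (RootMod.of A p e R i _)) = _ * aMap A p e R i n h _
  rw [hsmul, map_smul, smul_eq_mul, map_mul, aMap_algebraMap]

end RootAction

section Setting

variable (A : Type u) [CommRing A] [IsDomain A] [IsNoetherianRing A]
variable (p : ℕ) [Fact p.Prime] [CharP A p] (e : ℕ)
variable (R : Type u) [CommRing R] [IsDomain R] [Algebra A R] [CharP R p]
variable [Module.Flat A R] [Algebra.EssFiniteType A R]
variable (L : Type u) [AddCommGroup L] [Module R L]
variable [Module.Finite R L] [Module.Projective R L]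
variable (I 𝔞 : Ideal R) (lam : ℝ)
variable (φ : RootMod A p e R 1 L →ₗ[BRing A p e R 1] BRing A p e R 1)
variable (Φt : (n : ℕ) → (L ⊗[R] BRing A p e R n) →+ BRing A p e R (n + 1))
variable (Φ : (n : ℕ) → (RootMod A p e R n (LObj R L (p ^ e) n)
  →ₗ[BRing A p e R n] BRing A p e R n))

/-- Lemma on Skoda-type behaviour of limiting relative test ideals.
In the Setting, if `lam > μ(𝔞) - 1` (expressed by the existence of a generating set
`s` of `𝔞` with `s.card - 1 < lam`; since `μ(𝔞)` is the minimal cardinality of such a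
set, this is equivalent to `lam > μ(𝔞) - 1`), then for every `n ≥ 0`,
`τ_n(X/V, φ I, 𝔞^lam) · 𝔞 = τ_n(X/V, φ I, 𝔞^{lam+1})` as ideals of `B_n`. -/
theorem statement4
    (hlam : 0 < lam)
    (s : Finset R) (hs : Ideal.span (s : Set R) = 𝔞)
    (hcard : (s.card : ℝ) - 1 < lam) (n : ℕ) :
    tauRel A p e R L Φ I 𝔞 lam n * Ideal.map (algebraMap R (BRing A p e R n)) 𝔞
      = tauRel A p e R L Φ I 𝔞 (lam + 1) n := by
  subst hs
  have hQ (i : ℕ) : 0 < (p ^ e) ^ i := pow_pos (pow_pos (Fact.out : p.Prime).pos e) i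
  simp only [tauRel, Set.image_image, ← Nat.cast_pow, Nat.ceil_natCast_mul_add_one _ hlam.le,
    Ideal.iSup_mul]
  refine iSup_congr fun i => ?_
  exact span_image_span_pow_mul_smul_top_mul_map (phiInB A p e R L Φ i n _) _
    (phiInB_pow_smul A p e R L Φ i n _) s I (Nat.mul_pred_lt_ceil_mul_add (hQ i) hcard)
end Setting
end
end
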